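/- arXiv:0906.1882 — 6 statements merged into one kernel-verified Lean document; each statement's English description precedes it below -/
import Mathlib

section
/- Let ω : (0,∞) → (0,∞) and define p_ω := sup { p > 0 : ω(st) ≤ t^p ω(s) for all s > 0 and t ∈ (0,1) }. If this set is nonempty and bounded above, then the supremum is attained: ω(st) ≤ t^{p_ω} ω(s) for all s > 0 and t ∈ (0,1). -/
/-- The strictly critical lower type index is attained. -/
theorem strictly_lower_type_attained (ω : ℝ → ℝ)
    (hpos : ∀ t > 0, 0 < ω t)
    (S : Set ℝ)
    (hS : S = {p : ℝ | 0 < p ∧ ∀ s > 0, ∀ t : ℝ, 0 < t → t < 1 → ω (s * t) ≤ t ^ p * ω s})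
    (hne : S.Nonempty) (hbdd : BddAbove S) :
    ∀ s > 0, ∀ t : ℝ, 0 < t → t < 1 → ω (s * t) ≤ t ^ sSup S * ω s := by
  intro s hs t ht ht1
  have key : ∀ ε > 0, ω (s * t) ≤ t ^ (sSup S - ε) * ω s := by
    intro ε hε
    obtain ⟨p, hpS, hp⟩ := exists_lt_of_lt_csSup hne
      (show sSup S - ε < sSup S by linarith)
    rw [hS] at hpS
    calc ω (s * t) ≤ t ^ p * ω s := hpS.2 s hs t ht ht1
      _ ≤ t ^ (sSup S - ε) * ω s := by
          apply mul_le_mul_of_nonneg_right _ (hpos s hs).le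
          exact Real.rpow_le_rpow_of_exponent_ge ht ht1.le hp.le
  have htend : Filter.Tendsto (fun ε : ℝ => t ^ (sSup S - ε) * ω s)
      (nhdsWithin 0 (Set.Ioi 0)) (nhds (t ^ sSup S * ω s)) := by
    have h1 : Filter.Tendsto (fun ε : ℝ => sSup S - ε) (nhds 0) (nhds (sSup S)) := by
      have := ((continuous_const (y := sSup S)).sub continuous_id).tendsto (0 : ℝ)
      have h' : Filter.Tendsto (fun ε : ℝ => sSup S - ε) (nhds 0) (nhds (sSup S - 0)) := this
      rwa [sub_zero] at h'
    have h2 : ContinuousAt (fun x : ℝ => t ^ x) (sSup S) :=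
      Real.continuousAt_const_rpow (ne_of_gt ht)
    exact ((h2.tendsto.comp h1).mul_const (ω s)).mono_left nhdsWithin_le_nhds
  refine ge_of_tendsto htend ?_
  filter_upwards [self_mem_nhdsWithin] with ε hε using key ε hε
end

section
/- Let 0 < p₀ ≤ p₁ ≤ 1 and let ω : (0,∞) → (0,∞) be a strictly increasing bijection. Define ρ(t) := t^{-1} / ω^{-1}(t^{-1}) for t > 0. If ω is of type (p₀, p₁), i.e., there exists C ≥ 1 such that ω(st) ≤ C t^{p₁} ω(s) for all t ≥ 1, s > 0 and ω(st) ≤ C t^{p₀} ω(s) for all t ∈ (0,1], s > 0, then ρ is of type (p₁^{-1} − 1, p₀^{-1} − 1): there exists C' ≥ 1 such that ρ(st) ≤ C' t^{1/p₀ − 1} ρ(s) for all t ≥ 1, s > 0 and ρ(st) ≤ C' t^{1/p₁ − 1} ρ(s) for all t ∈ (0,1], s > 0. -/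
/-- If ω is of type (p₀,p₁) then ρ(t) = t⁻¹/ω⁻¹(t⁻¹) is of type (1/p₁ - 1, 1/p₀ - 1). -/
theorem rho_type (p₀ p₁ : ℝ) (h0 : 0 < p₀) (h01 : p₀ ≤ p₁) (h1 : p₁ ≤ 1)
    (ω ωinv : ℝ → ℝ)
    (hmono : StrictMonoOn ω (Set.Ioi 0))
    (hωpos : ∀ t > 0, 0 < ω t)
    (hinvpos : ∀ t > 0, 0 < ωinv t)
    (hinv1 : ∀ t > 0, ωinv (ω t) = t) (hinv2 : ∀ t > 0, ω (ωinv t) = t)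
    (ρ : ℝ → ℝ) (hρ : ∀ t > 0, ρ t = t⁻¹ / ωinv t⁻¹)
    (C : ℝ) (hC : 1 ≤ C)
    (hup : ∀ s > 0, ∀ t ≥ (1 : ℝ), ω (s * t) ≤ C * t ^ p₁ * ω s)
    (hlo : ∀ s > 0, ∀ t : ℝ, 0 < t → t ≤ 1 → ω (s * t) ≤ C * t ^ p₀ * ω s) :
    ∃ C' ≥ (1 : ℝ),
      (∀ s > 0, ∀ t ≥ (1 : ℝ), ρ (s * t) ≤ C' * t ^ (1 / p₀ - 1) * ρ s) ∧
      (∀ s > 0, ∀ t : ℝ, 0 < t → t ≤ 1 → ρ (s * t) ≤ C' * t ^ (1 / p₁ - 1) * ρ s) := by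
  have hCpos : (0 : ℝ) < C := lt_of_lt_of_le one_pos hC
  have h1' : 0 < p₁ := lt_of_lt_of_le h0 h01
  -- monotonicity of ωinv
  have hinvmono : ∀ a > (0:ℝ), ∀ b > (0:ℝ), a ≤ b → ωinv a ≤ ωinv b := by
    intro a ha b hb hab
    by_contra hlt
    push_neg at hlt
    have := hmono (Set.mem_Ioi.2 (hinvpos b hb)) (Set.mem_Ioi.2 (hinvpos a ha)) hlt
    rw [hinv2 a ha, hinv2 b hb] at this
    exact absurd hab (not_le.2 this)
  -- key lower bound 1 : for τ ≤ 1
  have key1 : ∀ u > (0:ℝ), ∀ τ : ℝ, 0 < τ → τ ≤ 1 →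
      (τ / C) ^ (1 / p₀) * ωinv u ≤ ωinv (u * τ) := by
    intro u hu τ hτ hτ1
    set s₀ := ωinv u with hs₀def
    have hs₀ : 0 < s₀ := hinvpos u hu
    have hτC : 0 < τ / C := div_pos hτ hCpos
    set σ := (τ / C) ^ (1 / p₀) with hσdef
    have hσpos : 0 < σ := Real.rpow_pos_of_pos hτC _
    have hσ1 : σ ≤ 1 := by
      apply Real.rpow_le_one (le_of_lt hτC)
      · exact div_le_one_of_le₀ (le_trans hτ1 hC) (le_of_lt hCpos)
      · positivity
    have hσp : σ ^ p₀ = τ / C := by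
      rw [hσdef, ← Real.rpow_mul (le_of_lt hτC), one_div_mul_cancel (ne_of_gt h0),
        Real.rpow_one]
    have hbd : ω (s₀ * σ) ≤ τ * u := by
      have := hlo s₀ hs₀ σ hσpos hσ1
      rw [hσp, hinv2 u hu] at this
      calc ω (s₀ * σ) ≤ C * (τ / C) * u := this
        _ = τ * u := by field_simp
    have hprodpos : 0 < s₀ * σ := mul_pos hs₀ hσpos
    have h2 : ωinv (ω (s₀ * σ)) ≤ ωinv (τ * u) :=
      hinvmono _ (hωpos _ hprodpos) _ (mul_pos hτ hu) hbd
    rw [hinv1 _ hprodpos] at h2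
    rw [mul_comm u τ]
    calc σ * s₀ = s₀ * σ := mul_comm _ _
      _ ≤ ωinv (τ * u) := h2
  -- key lower bound 2 : for τ ≥ 1
  have key2 : ∀ u > (0:ℝ), ∀ τ ≥ (1:ℝ),
      (τ / C) ^ (1 / p₁) * ωinv u ≤ ωinv (u * τ) := by
    intro u hu τ hτ
    have hτpos : 0 < τ := lt_of_lt_of_le one_pos hτ
    set s₀ := ωinv u with hs₀def
    have hs₀ : 0 < s₀ := hinvpos u hu
    have hτC : 0 < τ / C := div_pos hτpos hCpos
    set σ := (τ / C) ^ (1 / p₁) with hσdef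
    have hσpos : 0 < σ := Real.rpow_pos_of_pos hτC _
    have hσp : σ ^ p₁ = τ / C := by
      rw [hσdef, ← Real.rpow_mul (le_of_lt hτC), one_div_mul_cancel (ne_of_gt h1'),
        Real.rpow_one]
    have hbd : ω (s₀ * σ) ≤ τ * u := by
      rcases le_or_gt 1 σ with hσ1 | hσ1
      · have := hup s₀ hs₀ σ hσ1
        rw [hσp, hinv2 u hu] at this
        calc ω (s₀ * σ) ≤ C * (τ / C) * u := this
          _ = τ * u := by field_simp
      · have hle : s₀ * σ ≤ s₀ := by nlinarith
        have hωle : ω (s₀ * σ) ≤ ω s₀ := by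
          rcases eq_or_lt_of_le hle with h | h
          · rw [h]
          · exact le_of_lt (hmono (Set.mem_Ioi.2 (mul_pos hs₀ hσpos))
              (Set.mem_Ioi.2 hs₀) h)
        rw [hinv2 u hu] at hωle
        calc ω (s₀ * σ) ≤ u := hωle
          _ ≤ τ * u := le_mul_of_one_le_left (le_of_lt hu) hτ
    have hprodpos : 0 < s₀ * σ := mul_pos hs₀ hσpos
    have h2 : ωinv (ω (s₀ * σ)) ≤ ωinv (τ * u) :=
      hinvmono _ (hωpos _ hprodpos) _ (mul_pos hτpos hu) hbd
    rw [hinv1 _ hprodpos] at h2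
    rw [mul_comm u τ]
    calc σ * s₀ = s₀ * σ := mul_comm _ _
      _ ≤ ωinv (τ * u) := h2
  -- common computation
  have main : ∀ q : ℝ, 0 < q → ∀ u > (0:ℝ), ∀ τ > (0:ℝ),
      (τ / C) ^ (1 / q) * ωinv u ≤ ωinv (u * τ) →
      (u * τ) / ωinv (u * τ) ≤ C ^ (1 / q) * τ ^ (1 - 1 / q) * (u / ωinv u) := by
    intro q hq u hu τ hτ hkey
    have hA : 0 < ωinv u := hinvpos u hu
    have hB : 0 < ωinv (u * τ) := hinvpos _ (mul_pos hu hτ)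
    have hlb : 0 < (τ / C) ^ (1 / q) * ωinv u := by positivity
    have h₁ : (u * τ) / ωinv (u * τ) ≤ (u * τ) / ((τ / C) ^ (1 / q) * ωinv u) :=
      div_le_div_of_nonneg_left (by positivity) hlb hkey
    refine h₁.trans (le_of_eq ?_)
    rw [Real.div_rpow (le_of_lt hτ) (le_of_lt hCpos), Real.rpow_sub hτ, Real.rpow_one]
    have hτq : (0:ℝ) < τ ^ (1/q) := Real.rpow_pos_of_pos hτ _
    have hCq : (0:ℝ) < C ^ (1/q) := Real.rpow_pos_of_pos hCpos _
    field_simp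
  -- conclusion
  refine ⟨C ^ (1 / p₀), ?_, ?_, ?_⟩
  · calc (1:ℝ) = 1 ^ (1/p₀) := (Real.one_rpow _).symm
      _ ≤ C ^ (1/p₀) := Real.rpow_le_rpow zero_le_one hC (by positivity)
  · -- upper type part: t ≥ 1
    intro s hs t ht
    have htpos : 0 < t := lt_of_lt_of_le one_pos ht
    have hstpos : 0 < s * t := mul_pos hs htpos
    have hu : (0:ℝ) < s⁻¹ := inv_pos.2 hs
    have hτpos : (0:ℝ) < t⁻¹ := inv_pos.2 htpos
    have hτ1 : t⁻¹ ≤ 1 := inv_le_one_of_one_le₀ ht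
    have hk := key1 s⁻¹ hu t⁻¹ hτpos hτ1
    have hm := main p₀ h0 s⁻¹ hu t⁻¹ hτpos hk
    rw [hρ (s*t) hstpos, hρ s hs, mul_inv]
    have hexp : (t⁻¹ : ℝ) ^ (1 - 1/p₀) = t ^ (1/p₀ - 1) := by
      rw [Real.inv_rpow (le_of_lt htpos), ← Real.rpow_neg (le_of_lt htpos), neg_sub]
    rw [hexp] at hm
    exact hm
  · -- lower type part: t ≤ 1
    intro s hs t htpos ht1
    have hstpos : 0 < s * t := mul_pos hs htpos
    have hu : (0:ℝ) < s⁻¹ := inv_pos.2 hs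
    have hτ1 : (1:ℝ) ≤ t⁻¹ := (one_le_inv₀ htpos).2 ht1
    have hτpos : (0:ℝ) < t⁻¹ := lt_of_lt_of_le one_pos hτ1
    have hk := key2 s⁻¹ hu t⁻¹ hτ1
    have hm := main p₁ h1' s⁻¹ hu t⁻¹ hτpos hk
    rw [hρ (s*t) hstpos, hρ s hs, mul_inv]
    have hexp : (t⁻¹ : ℝ) ^ (1 - 1/p₁) = t ^ (1/p₁ - 1) := by
      rw [Real.inv_rpow (le_of_lt htpos), ← Real.rpow_neg (le_of_lt htpos), neg_sub]
    rw [hexp] at hm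
    refine hm.trans ?_
    have hCle : C ^ (1/p₁) ≤ C ^ (1/p₀) :=
      Real.rpow_le_rpow_of_exponent_le hC
        (one_div_le_one_div_of_le h0 h01)
    have hρs : 0 ≤ s⁻¹ / ωinv s⁻¹ := le_of_lt (div_pos hu (hinvpos _ hu))
    have htp : (0:ℝ) ≤ t ^ (1/p₁ - 1) := le_of_lt (Real.rpow_pos_of_pos htpos _)
    apply mul_le_mul_of_nonneg_right (mul_le_mul_of_nonneg_right hCle htp) hρs
end

section
/- Let ω be concave on [0,∞) with ω(0)=0, strictly increasing, and let ρ(t) = t^{-1}/ω^{-1}(t^{-1}). Let B ⊂ ℝⁿ be a ball and let a be a measurable function on ℝⁿ supported in B with ∫ ω(|a(x)|) well-defined and ‖a‖_{L²} ≤ |B|^{-1/2} ρ(|B|)^{-1} (where |B| is the Lebesgue measure of B). Then ∫_{ℝⁿ} ω(|a(x)|) dx ≤ 1, i.e., the Luxemburg norm ‖a‖_{L(ω)} ≤ 1. -/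
open MeasureTheory

/-- A concave strictly increasing function on `[0, ∞)` has a supporting line with
nonnegative slope at any interior point `M > 0`. -/
lemma exists_support_line_aux {ω : ℝ → ℝ} (hconc : ConcaveOn ℝ (Set.Ici 0) ω)
    (hmono : StrictMonoOn ω (Set.Ici 0)) {M : ℝ} (hM : 0 < M) :
    ∃ s : ℝ, 0 ≤ s ∧ ∀ y ≥ (0 : ℝ), ω y ≤ ω M + s * (y - M) := by
  set S : Set ℝ := (fun x => (ω x - ω M) / (x - M)) '' Set.Ioi M with hS
  have hne : S.Nonempty := ⟨_, ⟨M + 1, by simp, rfl⟩⟩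
  have hbdd : BddAbove S := by
    refine ⟨(ω M - ω (M / 2)) / (M - M / 2), ?_⟩
    rintro _ ⟨x, hx, rfl⟩
    have hx' : M < x := hx
    exact hconc.slope_anti_adjacent (Set.mem_Ici.mpr (by positivity))
      (Set.mem_Ici.mpr (le_of_lt (lt_trans hM hx'))) (by linarith) hx'
  refine ⟨sSup S, ?_, ?_⟩
  · have hmem : (ω (M + 1) - ω M) / (M + 1 - M) ∈ S := ⟨M + 1, by simp, rfl⟩
    have h0 : 0 ≤ (ω (M + 1) - ω M) / (M + 1 - M) := by
      have := hmono (Set.mem_Ici.mpr (le_of_lt hM))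
        (Set.mem_Ici.mpr (by positivity : (0:ℝ) ≤ M + 1)) (by linarith)
      apply div_nonneg <;> linarith
    exact le_trans h0 (le_csSup hbdd hmem)
  · intro y hy
    rcases lt_trichotomy y M with hlt | heq | hgt
    · have hle : sSup S ≤ (ω M - ω y) / (M - y) := by
        apply csSup_le hne
        rintro _ ⟨x, hx, rfl⟩
        exact hconc.slope_anti_adjacent (Set.mem_Ici.mpr hy)
          (Set.mem_Ici.mpr (le_of_lt (lt_trans hM hx))) hlt hx
      have hMy : 0 < M - y := by linarith
      have := (le_div_iff₀ hMy).mp hle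
      nlinarith
    · subst heq; simp
    · have hmem : (ω y - ω M) / (y - M) ∈ S := ⟨y, hgt, rfl⟩
      have hle : (ω y - ω M) / (y - M) ≤ sSup S := le_csSup hbdd hmem
      have hyM : 0 < y - M := by linarith
      have := (div_le_iff₀ hyM).mp hle
      nlinarith

/-- An (ω,2)-atom a supported in a ball B with ‖a‖_{L²} ≤ |B|^{-1/2} ρ(|B|)^{-1}
satisfies ∫ ω(|a|) ≤ 1, i.e. ‖a‖_{L(ω)} ≤ 1. -/
theorem atom_luxemburg_norm_le_one (n : ℕ) (ω ωinv : ℝ → ℝ)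
    (hconc : ConcaveOn ℝ (Set.Ici 0) ω) (hmono : StrictMonoOn ω (Set.Ici 0))
    (hzero : ω 0 = 0)
    (hinvpos : ∀ t > 0, 0 < ωinv t)
    (hinv1 : ∀ t ≥ (0 : ℝ), ωinv (ω t) = t) (hinv2 : ∀ t ≥ (0 : ℝ), ω (ωinv t) = t)
    (ρ : ℝ → ℝ) (hρ : ∀ t > 0, ρ t = t⁻¹ / ωinv t⁻¹)
    (c : Fin n → ℝ) (r : ℝ) (hr : 0 < r)
    (a : (Fin n → ℝ) → ℝ)
    (hsupp : ∀ x ∉ Metric.ball c r, a x = 0)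
    (hmeas : Measurable a)
    (hint : Integrable (fun x => ω |a x|))
    (hL2 : (∫⁻ x, ENNReal.ofReal ((a x) ^ 2)) ≤
      ENNReal.ofReal (((volume (Metric.ball c r)).toReal)⁻¹ *
        ((ρ ((volume (Metric.ball c r)).toReal))⁻¹) ^ 2)) :
    (∫ x, ω |a x|) ≤ 1 := by
  set B := Metric.ball c r with hB
  have hBmeas : MeasurableSet B := measurableSet_ball
  have hVpos' : 0 < volume B := Metric.measure_ball_pos _ _ hr
  have hVlt : volume B < ⊤ := measure_ball_lt_top
  set V : ℝ := (volume B).toReal with hV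
  have hVpos : 0 < V := ENNReal.toReal_pos hVpos'.ne' hVlt.ne
  set M : ℝ := ωinv V⁻¹ with hM
  have hMpos : 0 < M := hinvpos _ (by positivity)
  have hωM : ω M = V⁻¹ := hinv2 _ (by positivity)
  -- rewrite the L² bound
  have hRHS : V⁻¹ * ((ρ V)⁻¹) ^ 2 = V * M ^ 2 := by
    rw [hρ V hVpos, ← hM]
    field_simp
  rw [hRHS] at hL2
  -- Cauchy–Schwarz to bound the L¹ norm on B
  set F : (Fin n → ℝ) → ENNReal := fun x => ENNReal.ofReal |a x| with hF
  have hFmeas : Measurable F := ENNReal.measurable_ofReal.comp hmeas.abs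
  have hF2 : ∀ x, F x ^ (2 : ℝ) = ENNReal.ofReal ((a x) ^ 2) := by
    intro x
    rw [hF]
    rw [show ((2:ℝ) = ((2:ℕ):ℝ)) by norm_num, ENNReal.rpow_natCast,
      ← ENNReal.ofReal_pow (abs_nonneg _), sq_abs]
  have h1 : (∫⁻ x in B, F x ^ (2 : ℝ)) ≤ ENNReal.ofReal (V * M ^ 2) := by
    calc (∫⁻ x in B, F x ^ (2 : ℝ)) ≤ ∫⁻ x, F x ^ (2 : ℝ) :=
          setLIntegral_le_lintegral _ _
      _ = ∫⁻ x, ENNReal.ofReal ((a x) ^ 2) := by simp_rw [hF2]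
      _ ≤ _ := hL2
  have hconj : (2 : ℝ).HolderConjugate 2 := ⟨by norm_num, by norm_num, by norm_num⟩
  have hCS : (∫⁻ x in B, F x) ≤ ENNReal.ofReal (V * M) := by
    have := ENNReal.lintegral_mul_le_Lp_mul_Lq (volume.restrict B) hconj
      hFmeas.aemeasurable (aemeasurable_const (b := (1 : ENNReal)))
    simp only [Pi.mul_apply, mul_one, ENNReal.one_rpow, lintegral_const, one_mul,
      Measure.restrict_apply MeasurableSet.univ, Set.univ_inter] at this
    calc (∫⁻ x in B, F x)
        ≤ (∫⁻ x in B, F x ^ (2:ℝ)) ^ ((1:ℝ)/2) * (volume B) ^ ((1:ℝ)/2) := this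
      _ ≤ (ENNReal.ofReal (V * M ^ 2)) ^ ((1:ℝ)/2) * (ENNReal.ofReal V) ^ ((1:ℝ)/2) := by
          gcongr
          rw [hV, ENNReal.ofReal_toReal hVlt.ne]
      _ = ENNReal.ofReal ((V * M ^ 2) ^ ((1:ℝ)/2) * V ^ ((1:ℝ)/2)) := by
          rw [ENNReal.ofReal_rpow_of_nonneg (by positivity) (by norm_num),
            ENNReal.ofReal_rpow_of_nonneg (by positivity) (by norm_num),
            ENNReal.ofReal_mul (by positivity)]
      _ = ENNReal.ofReal (V * M) := by
          congr 1
          rw [← Real.mul_rpow (by positivity) (by positivity)]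
          have hx : V * M ^ 2 * V = (V * M) ^ 2 := by ring
          rw [hx, show ((1:ℝ)/2 = ((2:ℕ):ℝ)⁻¹) by norm_num,
            Real.pow_rpow_inv_natCast (by positivity) two_ne_zero]
  -- integrability of a on B
  have hint_a : IntegrableOn a B := by
    refine ⟨hmeas.aestronglyMeasurable, ?_⟩
    rw [HasFiniteIntegral]
    have : ∀ x, (‖a x‖ₑ : ENNReal) = F x := by
      intro x
      rw [hF, ← ofReal_norm, Real.norm_eq_abs]
    simp_rw [this]
    exact lt_of_le_of_lt hCS ENNReal.ofReal_lt_top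
  -- the mean of |a| on B is at most M
  have hmean : (∫ x in B, |a x|) ≤ V * M := by
    rw [integral_eq_lintegral_of_nonneg_ae (Filter.Eventually.of_forall fun x => abs_nonneg _)
      hmeas.abs.aestronglyMeasurable]
    calc (∫⁻ x in B, ENNReal.ofReal |a x|).toReal
        ≤ (ENNReal.ofReal (V * M)).toReal := ENNReal.toReal_mono ENNReal.ofReal_ne_top hCS
      _ = V * M := ENNReal.toReal_ofReal (by positivity)
  -- supporting line for ω at M
  obtain ⟨s, hs0, hsl⟩ := exists_support_line_aux hconc hmono hMpos
  have hA : (∫ x, ω |a x|) = ∫ x in B, ω |a x| := by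
    refine (setIntegral_eq_integral_of_forall_compl_eq_zero fun x hx => ?_).symm
    rw [hsupp x hx, abs_zero, hzero]
  have hconstint : IntegrableOn (fun _ : Fin n → ℝ => M) B :=
    integrableOn_const hVlt.ne
  have habs : IntegrableOn (fun x => |a x|) B := hint_a.abs
  have hsub : IntegrableOn (fun x => |a x| - M) B := habs.sub hconstint
  have hmul : IntegrableOn (fun x => s * (|a x| - M)) B := hsub.const_mul s
  have hrhsint : IntegrableOn (fun x => ω M + s * (|a x| - M)) B :=
    (integrableOn_const hVlt.ne).add hmul
  rw [hA]
  calc (∫ x in B, ω |a x|)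
      ≤ ∫ x in B, (ω M + s * (|a x| - M)) := by
        refine setIntegral_mono_on hint.integrableOn hrhsint hBmeas fun x _ => ?_
        exact hsl _ (abs_nonneg _)
    _ = V * ω M + s * ((∫ x in B, |a x|) - V * M) := by
        rw [integral_add (integrableOn_const (C := ω M) hVlt.ne) hmul,
          integral_const, integral_const_mul,
          integral_sub habs hconstint, integral_const]
        simp [hV, smul_eq_mul, Measure.real]
    _ ≤ V * ω M := by
        have : s * ((∫ x in B, |a x|) - V * M) ≤ 0 :=
          mul_nonpos_of_nonneg_of_nonpos hs0 (by linarith)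
        linarith
    _ = 1 := by rw [hωM]; field_simp
end

section
/- Let ω : [0,∞) → [0,∞) be continuous, increasing with ω(0)=0, of upper type 1 and lower type p ∈ (0,1]. Suppose g, h : ℝⁿ → [0,∞] are measurable and for all λ > 0, σ_h(λ) ≤ C₀ ( σ_g(λ) + λ^{-2} ∫₀^λ t σ_g(t) dt ) for some constant C₀ > 0, where σ denotes the distribution function. Then ∫ ω(h(x)) dx ≤ C ∫ ω(g(x)) dx for a constant C depending only on C₀ and ω. -/
open MeasureTheory
open scoped ENNReal

section Aux

open Set

/-- Generic layer-cake style swap: for measurable `W V : ℝ → ℝ≥0∞`,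
`∫_{l>0} W l ∫_{0<t<l} V t = ∫_{t>0} V t ∫_{l>t} W l`. -/
lemma swap_aux (W V : ℝ → ℝ≥0∞) (hW : Measurable W) (hV : Measurable V) :
    (∫⁻ l in Set.Ioi (0 : ℝ), W l * ∫⁻ t in Set.Ioo (0 : ℝ) l, V t) =
      ∫⁻ t in Set.Ioi (0 : ℝ), V t * ∫⁻ l in Set.Ioi t, W l := by
  set S : Set (ℝ × ℝ) := {q | 0 < q.2 ∧ q.2 < q.1} with hS
  have hSm : MeasurableSet S := by
    apply MeasurableSet.inter
    · exact measurableSet_lt measurable_const measurable_snd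
    · exact measurableSet_lt measurable_snd measurable_fst
  set H : ℝ × ℝ → ℝ≥0∞ := S.indicator (fun q => W q.1 * V q.2) with hH
  have hHm : Measurable H := ((hW.comp measurable_fst).mul (hV.comp measurable_snd)).indicator hSm
  have left : ∀ l : ℝ, (∫⁻ t, H (l, t)) = W l * ∫⁻ t in Set.Ioo (0 : ℝ) l, V t := by
    intro l
    have : ∀ t, H (l, t) = (Set.Ioo (0:ℝ) l).indicator (fun t => W l * V t) t := by
      intro t
      simp only [hH, Set.indicator_apply, hS, Set.mem_setOf_eq, Set.mem_Ioo]
    simp_rw [this]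
    rw [lintegral_indicator measurableSet_Ioo _]
    rw [lintegral_const_mul _ hV]
  have right : ∀ t : ℝ, (∫⁻ l, H (l, t)) =
      (Set.Ioi (0:ℝ)).indicator (fun t => V t * ∫⁻ l in Set.Ioi t, W l) t := by
    intro t
    by_cases ht : 0 < t
    · have : ∀ l, H (l, t) = (Set.Ioi t).indicator (fun l => W l * V t) l := by
        intro l
        simp only [hH, Set.indicator_apply, hS, Set.mem_setOf_eq, Set.mem_Ioi, ht, true_and]
      simp_rw [this]
      rw [lintegral_indicator measurableSet_Ioi _, Set.indicator_of_mem (Set.mem_Ioi.mpr ht)]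
      simp_rw [mul_comm (W _) (V t)]
      rw [lintegral_const_mul _ hW]
    · have : ∀ l, H (l, t) = 0 := by
        intro l
        simp only [hH, Set.indicator_apply, hS, Set.mem_setOf_eq]
        simp [ht]
      simp [this, Set.indicator_of_notMem (by simpa using ht : t ∉ Set.Ioi (0:ℝ))]
  calc (∫⁻ l in Set.Ioi (0 : ℝ), W l * ∫⁻ t in Set.Ioo (0 : ℝ) l, V t)
      = ∫⁻ l in Set.Ioi (0 : ℝ), ∫⁻ t, H (l, t) := by
        refine setLIntegral_congr_fun measurableSet_Ioi ?_
        intro l _; exact (left l).symm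
    _ = ∫⁻ l, ∫⁻ t, H (l, t) := by
        rw [← lintegral_indicator measurableSet_Ioi _]
        refine lintegral_congr fun l => ?_
        by_cases hl : l ∈ Set.Ioi (0:ℝ)
        · rw [Set.indicator_of_mem hl]
        · rw [Set.indicator_of_notMem hl, left l]
          have : Set.Ioo (0:ℝ) l = ∅ := Set.Ioo_eq_empty (by simpa using hl)
          simp [this]
    _ = ∫⁻ t, ∫⁻ l, H (l, t) := by
        apply lintegral_lintegral_swap
        exact hHm.aemeasurable
    _ = ∫⁻ t in Set.Ioi (0 : ℝ), V t * ∫⁻ l in Set.Ioi t, W l := by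
        simp_rw [right]
        rw [lintegral_indicator measurableSet_Ioi _]

/-- Layer cake: `∫ Φ(f x) dμ = ∫_{u>0} w u * μ {f > u}` where `Φ λ = ∫_{0<u<λ} w u`. -/
lemma layer_aux {α : Type*} [MeasurableSpace α] (μ : Measure α) [SigmaFinite μ]
    (w : ℝ → ℝ≥0∞) (hw : Measurable w) (f : α → ℝ) (hf : Measurable f) :
    (∫⁻ x, ∫⁻ u in Set.Ioo (0 : ℝ) (f x), w u ∂volume ∂μ) =
      ∫⁻ u in Set.Ioi (0 : ℝ), w u * μ {x | f x > u} := by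
  set S : Set (α × ℝ) := {q | 0 < q.2 ∧ q.2 < f q.1} with hS
  have hSm : MeasurableSet S := by
    apply MeasurableSet.inter
    · exact measurableSet_lt measurable_const measurable_snd
    · exact measurableSet_lt measurable_snd (hf.comp measurable_fst)
  set H : α × ℝ → ℝ≥0∞ := S.indicator (fun q => w q.2) with hH
  have hHm : Measurable H := (hw.comp measurable_snd).indicator hSm
  have left : ∀ x, (∫⁻ u, H (x, u)) = ∫⁻ u in Set.Ioo (0 : ℝ) (f x), w u := by
    intro x
    have : ∀ u, H (x, u) = (Set.Ioo (0:ℝ) (f x)).indicator w u := by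
      intro u
      simp only [hH, Set.indicator_apply, hS, Set.mem_setOf_eq, Set.mem_Ioo]
    simp_rw [this]
    rw [lintegral_indicator measurableSet_Ioo _]
  have right : ∀ u : ℝ, (∫⁻ x, H (x, u) ∂μ) =
      (Set.Ioi (0:ℝ)).indicator (fun u => w u * μ {x | f x > u}) u := by
    intro u
    by_cases hu : 0 < u
    · have : ∀ x, H (x, u) = ({x | f x > u}).indicator (fun _ => w u) x := by
        intro x
        simp only [hH, Set.indicator_apply, hS, Set.mem_setOf_eq, hu, true_and, gt_iff_lt]
      simp_rw [this]
      rw [lintegral_indicator_const (measurableSet_lt measurable_const hf)]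
      rw [Set.indicator_of_mem (Set.mem_Ioi.mpr hu)]
    · have : ∀ x, H (x, u) = 0 := by
        intro x
        simp only [hH, Set.indicator_apply, hS, Set.mem_setOf_eq]
        simp [hu]
      simp [this, Set.indicator_of_notMem (by simpa using hu : u ∉ Set.Ioi (0:ℝ))]
  calc (∫⁻ x, ∫⁻ u in Set.Ioo (0 : ℝ) (f x), w u ∂volume ∂μ)
      = ∫⁻ x, ∫⁻ u, H (x, u) ∂volume ∂μ := by
        refine lintegral_congr fun x => (left x).symm
    _ = ∫⁻ u, ∫⁻ x, H (x, u) ∂μ := lintegral_lintegral_swap hHm.aemeasurable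
    _ = ∫⁻ u in Set.Ioi (0 : ℝ), w u * μ {x | f x > u} := by
        simp_rw [right]
        rw [lintegral_indicator measurableSet_Ioi _]

end Aux

/-- A good-lambda type comparison of distribution functions implies an Orlicz
norm comparison. -/
theorem omega_distribution_comparison (n : ℕ) (ω : ℝ → ℝ) (p : ℝ)
    (hp0 : 0 < p) (hp1 : p ≤ 1)
    (hcont : Continuous ω) (hmono : Monotone ω) (hzero : ω 0 = 0)
    (Cu Cl : ℝ) (hCu : 0 < Cu) (hCl : 0 < Cl)
    (hup : ∀ s > 0, ∀ t ≥ (1 : ℝ), ω (s * t) ≤ Cu * t * ω s)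
    (hlo : ∀ s > 0, ∀ t : ℝ, 0 < t → t ≤ 1 → ω (s * t) ≤ Cl * t ^ p * ω s)
    (g h : (Fin n → ℝ) → ℝ) (hgm : Measurable g) (hhm : Measurable h)
    (hg0 : ∀ x, 0 ≤ g x) (hh0 : ∀ x, 0 ≤ h x)
    (C₀ : ℝ) (hC₀ : 0 < C₀)
    (hdist : ∀ l > (0 : ℝ), volume {x | h x > l} ≤ ENNReal.ofReal C₀ *
      (volume {x | g x > l} +
        ((ENNReal.ofReal l)⁻¹) ^ 2 *
          ∫⁻ t in Set.Ioo (0 : ℝ) l, ENNReal.ofReal t * volume {x | g x > t})) :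
    ∃ C > (0 : ℝ),
      (∫⁻ x, ENNReal.ofReal (ω (h x))) ≤ ENNReal.ofReal C * ∫⁻ x, ENNReal.ofReal (ω (g x)) := by
  classical
  set μ : Measure (Fin n → ℝ) := volume with hμ
  -- basic facts about ω
  have hω0 : ∀ u : ℝ, 0 ≤ u → 0 ≤ ω u := fun u hu => hzero ▸ hmono hu
  set w : ℝ → ℝ≥0∞ := fun u => ENNReal.ofReal (ω u / u) with hw
  have hwm : Measurable w := ENNReal.measurable_ofReal.comp (hcont.measurable.div measurable_id)
  set Φ : ℝ → ℝ≥0∞ := fun l => ∫⁻ u in Set.Ioo (0 : ℝ) l, w u with hΦ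
  -- (A) lower bound for Φ
  have hA : ∀ l : ℝ, 0 ≤ l → ENNReal.ofReal (ω l) ≤ ENNReal.ofReal (4 * Cu) * Φ l := by
    intro l hl
    rcases eq_or_lt_of_le hl with h0 | h0
    · simp [← h0, hzero]
    have hl2 : 0 < l / 2 := by linarith
    have key1 : ω l ≤ 2 * Cu * ω (l / 2) := by
      have h2 := hup (l / 2) hl2 2 (by norm_num)
      calc ω l = ω ((l / 2) * 2) := by ring_nf
        _ ≤ Cu * 2 * ω (l / 2) := h2
        _ = 2 * Cu * ω (l / 2) := by ring
    have hlow : ENNReal.ofReal (ω (l / 2) / l) * ENNReal.ofReal (l / 2) ≤ Φ l := by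
      calc ENNReal.ofReal (ω (l / 2) / l) * ENNReal.ofReal (l / 2)
          = ∫⁻ _ in Set.Ioo (l / 2) l, ENNReal.ofReal (ω (l / 2) / l) := by
            rw [setLIntegral_const, Real.volume_Ioo]
            congr 1; ring_nf
        _ ≤ ∫⁻ u in Set.Ioo (l / 2) l, w u := by
            refine setLIntegral_mono hwm fun u hu => ?_
            refine ENNReal.ofReal_le_ofReal ?_
            have hu0 : 0 < u := hl2.trans hu.1
            exact div_le_div₀ (hω0 u hu0.le) (hmono hu.1.le) hu0 hu.2.le
        _ ≤ Φ l := lintegral_mono_set (Set.Ioo_subset_Ioo hl2.le le_rfl)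
    calc ENNReal.ofReal (ω l) ≤ ENNReal.ofReal (2 * Cu * ω (l / 2)) :=
          ENNReal.ofReal_le_ofReal key1
      _ = ENNReal.ofReal (4 * Cu) * (ENNReal.ofReal (ω (l / 2) / l) * ENNReal.ofReal (l / 2)) := by
          rw [← ENNReal.ofReal_mul (div_nonneg (hω0 _ hl2.le) hl), ←
            ENNReal.ofReal_mul (by positivity)]
          congr 1
          field_simp
          ring
      _ ≤ ENNReal.ofReal (4 * Cu) * Φ l := mul_le_mul_right hlow _
  -- (B) upper bound for Φ
  have hB : ∀ l : ℝ, 0 ≤ l → Φ l ≤ ENNReal.ofReal (Cl / p) * ENNReal.ofReal (ω l) := by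
    intro l hl
    rcases eq_or_lt_of_le hl with h0 | h0
    · have : Set.Ioo (0:ℝ) l = ∅ := by rw [← h0]; exact Set.Ioo_self 0
      simp [hΦ, this]
    have hlp : (0:ℝ) < l ^ p := Real.rpow_pos_of_pos h0 p
    set c : ℝ := Cl * ω l / l ^ p with hc
    have hc0 : 0 ≤ c := by
      have := hω0 l hl
      positivity
    have hpt : ∀ u ∈ Set.Ioo (0:ℝ) l, w u ≤ ENNReal.ofReal (c * u ^ (p - 1)) := by
      intro u hu
      refine ENNReal.ofReal_le_ofReal ?_
      have hu0 : 0 < u := hu.1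
      have hul : u / l ≤ 1 := by
        rw [div_le_one h0]; exact hu.2.le
      have hω : ω u ≤ Cl * (u / l) ^ p * ω l := by
        have := hlo l h0 (u / l) (by positivity) hul
        calc ω u = ω (l * (u / l)) := by rw [mul_div_cancel₀ _ (ne_of_gt h0)]
          _ ≤ Cl * (u / l) ^ p * ω l := this
      have hdiv : Cl * (u / l) ^ p * ω l / u = c * u ^ (p - 1) := by
        rw [Real.div_rpow hu0.le hl, hc, Real.rpow_sub hu0, Real.rpow_one]
        field_simp
      rw [← hdiv]
      exact div_le_div_of_nonneg_right hω hu0.le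
    have hJ : (∫⁻ u in Set.Ioo (0:ℝ) l, ENNReal.ofReal (u ^ (p - 1))) =
        ENNReal.ofReal (l ^ p / p) := by
      have hint : IntegrableOn (fun u : ℝ => u ^ (p - 1)) (Set.Ioo 0 l) volume := by
        have := (intervalIntegral.intervalIntegrable_rpow' (a := 0) (b := l)
          (by linarith : (-1:ℝ) < p - 1)).1
        exact this.mono_set Set.Ioo_subset_Ioc_self
      have hnn : 0 ≤ᵐ[volume.restrict (Set.Ioo (0:ℝ) l)] fun u : ℝ => u ^ (p - 1) := by
        refine (ae_restrict_iff' measurableSet_Ioo).2 <| Filter.Eventually.of_forall ?_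
        intro u hu
        exact Real.rpow_nonneg hu.1.le _
      rw [← MeasureTheory.ofReal_integral_eq_lintegral_ofReal hint hnn]
      congr 1
      rw [← MeasureTheory.integral_Ioc_eq_integral_Ioo,
        ← intervalIntegral.integral_of_le hl]
      rw [integral_rpow (Or.inl (by linarith : (-1:ℝ) < p - 1))]
      rw [Real.zero_rpow (by linarith : p - 1 + 1 ≠ 0)]
      ring_nf
    calc Φ l ≤ ∫⁻ u in Set.Ioo (0:ℝ) l, ENNReal.ofReal (c * u ^ (p - 1)) :=
          setLIntegral_mono (by fun_prop) hpt
      _ = ENNReal.ofReal c * ∫⁻ u in Set.Ioo (0:ℝ) l, ENNReal.ofReal (u ^ (p - 1)) := by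
          simp_rw [ENNReal.ofReal_mul hc0]
          rw [lintegral_const_mul' _ _ ENNReal.ofReal_ne_top]
      _ = ENNReal.ofReal c * ENNReal.ofReal (l ^ p / p) := by rw [hJ]
      _ = ENNReal.ofReal (Cl / p) * ENNReal.ofReal (ω l) := by
          rw [← ENNReal.ofReal_mul hc0, ← ENNReal.ofReal_mul (by positivity)]
          congr 1
          rw [hc]
          field_simp
          try ring
  -- (C) tail integral bound
  have hC : ∀ t : ℝ, 0 < t →
      (∫⁻ l in Set.Ioi t, w l * ((ENNReal.ofReal l)⁻¹) ^ 2) ≤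
        ENNReal.ofReal (Cu * (ω t / t) / t) := by
    intro t ht
    have hωt : 0 ≤ ω t := hω0 t ht.le
    have hpt : ∀ l ∈ Set.Ioi t, w l * ((ENNReal.ofReal l)⁻¹) ^ 2 ≤
        ENNReal.ofReal (Cu * (ω t / t)) * ENNReal.ofReal (l ^ (-2 : ℝ)) := by
      intro l hl
      have hl0 : 0 < l := ht.trans hl
      have hrp : l ^ (-2 : ℝ) = l⁻¹ * l⁻¹ := by
        rw [show (-2 : ℝ) = -(2:ℕ) by norm_num, Real.rpow_neg hl0.le, Real.rpow_natCast]
        rw [sq, mul_inv]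
      have hωl : ω l / l ≤ Cu * (ω t / t) := by
        have hge : (1:ℝ) ≤ l / t := (one_le_div ht).2 hl.le
        have := hup t ht (l / t) hge
        have h2 : ω l ≤ Cu * (l / t) * ω t := by
          calc ω l = ω (t * (l / t)) := by rw [mul_div_cancel₀ _ (ne_of_gt ht)]
            _ ≤ Cu * (l / t) * ω t := this
        rw [div_le_iff₀ hl0]
        calc ω l ≤ Cu * (l / t) * ω t := h2
          _ = Cu * (ω t / t) * l := by field_simp
      rw [← ENNReal.ofReal_inv_of_pos hl0, sq, ← ENNReal.ofReal_mul (by positivity),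
        ← ENNReal.ofReal_mul (div_nonneg (hω0 l hl0.le) hl0.le),
        ← ENNReal.ofReal_mul (by positivity), hrp]
      refine ENNReal.ofReal_le_ofReal ?_
      refine le_trans (mul_le_mul_of_nonneg_right hωl
        (by positivity : (0:ℝ) ≤ l⁻¹ * l⁻¹)) (le_of_eq (by ring))
    calc (∫⁻ l in Set.Ioi t, w l * ((ENNReal.ofReal l)⁻¹) ^ 2)
        ≤ ∫⁻ l in Set.Ioi t, ENNReal.ofReal (Cu * (ω t / t)) *
            ENNReal.ofReal (l ^ (-2 : ℝ)) := setLIntegral_mono' measurableSet_Ioi hpt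
      _ = ENNReal.ofReal (Cu * (ω t / t)) * ∫⁻ l in Set.Ioi t,
            ENNReal.ofReal (l ^ (-2 : ℝ)) :=
          lintegral_const_mul' _ _ ENNReal.ofReal_ne_top
      _ = ENNReal.ofReal (Cu * (ω t / t)) * ENNReal.ofReal t⁻¹ := by
          congr 1
          have hint : IntegrableOn (fun l : ℝ => l ^ (-2 : ℝ)) (Set.Ioi t) volume :=
            integrableOn_Ioi_rpow_of_lt (by norm_num) ht
          have hnn : 0 ≤ᵐ[volume.restrict (Set.Ioi t)] fun l : ℝ => l ^ (-2 : ℝ) := by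
            refine (ae_restrict_iff' measurableSet_Ioi).2 <| Filter.Eventually.of_forall ?_
            intro l hl
            exact Real.rpow_nonneg (ht.trans hl).le _
          rw [← MeasureTheory.ofReal_integral_eq_lintegral_ofReal hint hnn]
          congr 1
          rw [integral_Ioi_rpow_of_lt (by norm_num) ht]
          rw [show (-2 : ℝ) + 1 = -1 by norm_num, Real.rpow_neg_one]
          field_simp
      _ = ENNReal.ofReal (Cu * (ω t / t) / t) := by
          rw [← ENNReal.ofReal_mul (by positivity)]
          simp [div_eq_mul_inv]
  -- distribution functions are measurable
  have hσg : Measurable fun t : ℝ => μ {x | g x > t} := by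
    have : Antitone fun t : ℝ => μ {x | g x > t} := by
      intro a b hab
      exact measure_mono fun x hx => lt_of_le_of_lt hab hx
    exact this.measurable
  -- layer-cake for g and h
  have layer_g : (∫⁻ x, Φ (g x) ∂μ) = ∫⁻ u in Set.Ioi (0 : ℝ), w u * μ {x | g x > u} :=
    layer_aux μ w hwm g hgm
  have layer_h : (∫⁻ x, Φ (h x) ∂μ) = ∫⁻ u in Set.Ioi (0 : ℝ), w u * μ {x | h x > u} :=
    layer_aux μ w hwm h hhm
  -- the g-side integral bound
  have hg_side : (∫⁻ u in Set.Ioi (0 : ℝ), w u * μ {x | g x > u}) ≤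
      ENNReal.ofReal (Cl / p) * ∫⁻ x, ENNReal.ofReal (ω (g x)) ∂μ := by
    have hmg : Measurable fun x => ENNReal.ofReal (ω (g x)) :=
      ENNReal.measurable_ofReal.comp (hcont.measurable.comp hgm)
    rw [← layer_g, ← lintegral_const_mul (ENNReal.ofReal (Cl / p)) hmg]
    exact lintegral_mono fun x => hB (g x) (hg0 x)
  -- the double-integral term
  have hdouble : (∫⁻ l in Set.Ioi (0 : ℝ), w l * (((ENNReal.ofReal l)⁻¹) ^ 2 *
        ∫⁻ t in Set.Ioo (0 : ℝ) l, ENNReal.ofReal t * μ {x | g x > t})) ≤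
      ENNReal.ofReal Cu * ∫⁻ u in Set.Ioi (0 : ℝ), w u * μ {x | g x > u} := by
    set W : ℝ → ℝ≥0∞ := fun l => w l * ((ENNReal.ofReal l)⁻¹) ^ 2 with hW
    set V : ℝ → ℝ≥0∞ := fun t => ENNReal.ofReal t * μ {x | g x > t} with hV
    have hWm : Measurable W :=
      hwm.mul ((ENNReal.measurable_ofReal.comp measurable_id).inv.pow_const 2)
    have hVm : Measurable V := (ENNReal.measurable_ofReal.comp measurable_id).mul hσg
    calc (∫⁻ l in Set.Ioi (0 : ℝ), w l * (((ENNReal.ofReal l)⁻¹) ^ 2 *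
          ∫⁻ t in Set.Ioo (0 : ℝ) l, ENNReal.ofReal t * μ {x | g x > t}))
        = ∫⁻ l in Set.Ioi (0 : ℝ), W l * ∫⁻ t in Set.Ioo (0 : ℝ) l, V t := by
          refine setLIntegral_congr_fun measurableSet_Ioi ?_
          intro l _
          simp only [hW, hV, mul_assoc]
      _ = ∫⁻ t in Set.Ioi (0 : ℝ), V t * ∫⁻ l in Set.Ioi t, W l := swap_aux W V hWm hVm
      _ ≤ ∫⁻ t in Set.Ioi (0 : ℝ), V t * ENNReal.ofReal (Cu * (ω t / t) / t) := by
          refine setLIntegral_mono' measurableSet_Ioi fun t ht => ?_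
          exact mul_le_mul_right (hC t ht) _
      _ = ∫⁻ t in Set.Ioi (0 : ℝ), ENNReal.ofReal Cu * (w t * μ {x | g x > t}) := by
          refine setLIntegral_congr_fun measurableSet_Ioi ?_
          intro t ht
          rw [hV, hw]
          simp only []
          rw [mul_comm (ENNReal.ofReal t) (μ {x | g x > t}), mul_assoc,
            ← ENNReal.ofReal_mul ht.le]
          have : t * (Cu * (ω t / t) / t) = Cu * (ω t / t) := by
            have ht' : t ≠ 0 := ne_of_gt ht
            field_simp
          rw [this, ENNReal.ofReal_mul hCu.le]
          ring
      _ = ENNReal.ofReal Cu * ∫⁻ u in Set.Ioi (0 : ℝ), w u * μ {x | g x > u} :=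
          lintegral_const_mul' _ _ ENNReal.ofReal_ne_top
  -- main chain
  refine ⟨4 * Cu * C₀ * (Cl / p) * (1 + Cu), by positivity, ?_⟩
  set A : ℝ≥0∞ := ∫⁻ x, ENNReal.ofReal (ω (g x)) with hA'
  have hmgσ : Measurable fun l : ℝ => w l * μ {x | g x > l} := hwm.mul hσg
  calc (∫⁻ x, ENNReal.ofReal (ω (h x)))
      ≤ ∫⁻ x, ENNReal.ofReal (4 * Cu) * Φ (h x) := lintegral_mono fun x => hA _ (hh0 x)
    _ = ENNReal.ofReal (4 * Cu) * ∫⁻ x, Φ (h x) :=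
        lintegral_const_mul' _ _ ENNReal.ofReal_ne_top
    _ = ENNReal.ofReal (4 * Cu) * ∫⁻ l in Set.Ioi (0:ℝ), w l * μ {x | h x > l} := by
        rw [layer_h]
    _ ≤ ENNReal.ofReal (4 * Cu) * ∫⁻ l in Set.Ioi (0:ℝ), w l * (ENNReal.ofReal C₀ *
          (μ {x | g x > l} + ((ENNReal.ofReal l)⁻¹) ^ 2 *
            ∫⁻ t in Set.Ioo (0 : ℝ) l, ENNReal.ofReal t * μ {x | g x > t})) := by
        refine mul_le_mul_right (setLIntegral_mono' measurableSet_Ioi fun l hl => ?_) _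
        exact mul_le_mul_right (hdist l hl) _
    _ = ENNReal.ofReal (4 * Cu) * (ENNReal.ofReal C₀ *
          ((∫⁻ l in Set.Ioi (0:ℝ), w l * μ {x | g x > l}) +
           ∫⁻ l in Set.Ioi (0:ℝ), w l * (((ENNReal.ofReal l)⁻¹) ^ 2 *
            ∫⁻ t in Set.Ioo (0 : ℝ) l, ENNReal.ofReal t * μ {x | g x > t}))) := by
        congr 1
        rw [← lintegral_add_left hmgσ, ← lintegral_const_mul' _ _ ENNReal.ofReal_ne_top]
        refine lintegral_congr fun l => ?_
        ring
    _ ≤ ENNReal.ofReal (4 * Cu) * (ENNReal.ofReal C₀ *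
          (ENNReal.ofReal (Cl / p) * A +
           ENNReal.ofReal Cu * (ENNReal.ofReal (Cl / p) * A))) := by
        refine mul_le_mul_right (mul_le_mul_right (add_le_add hg_side ?_) _) _
        exact hdouble.trans (mul_le_mul_right hg_side _)
    _ = (ENNReal.ofReal (4 * Cu) * ENNReal.ofReal C₀ *
          (ENNReal.ofReal (Cl / p) + ENNReal.ofReal Cu * ENNReal.ofReal (Cl / p))) * A := by
        ring
    _ = ENNReal.ofReal (4 * Cu * C₀ * (Cl / p) * (1 + Cu)) * A := by
        congr 1
        rw [← ENNReal.ofReal_mul hCu.le, ← ENNReal.ofReal_add (by positivity) (by positivity),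
          ← ENNReal.ofReal_mul (by positivity), ← ENNReal.ofReal_mul (by positivity)]
        congr 1
        ring
end

section
/- Let ω be continuous, increasing, ω(0)=0, subadditive, of strictly lower type p ∈ (0,1]. Let (fₖ) be a sequence of measurable functions on a measure space with ∑ₖ ∫ ω(|fₖ|) dx < ∞. Then for every ε > 0 there exists N such that for all n > m ≥ N, the Luxemburg norm of ∑_{k=m}^{n} fₖ satisfies ‖∑_{k=m}^{n} fₖ‖_{L(ω)} ≤ ε; consequently the partial sums of ∑ₖ fₖ form a Cauchy sequence in the quasi-norm ‖·‖_{L(ω)}. -/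
open MeasureTheory
open scoped ENNReal

private lemma omega_nonneg {ω : ℝ → ℝ} (hmono : Monotone ω) (hzero : ω 0 = 0)
    {s : ℝ} (hs : 0 ≤ s) : 0 ≤ ω s := hzero ▸ hmono hs

private lemma omega_nat_mul {ω : ℝ → ℝ} (hmono : Monotone ω) (hzero : ω 0 = 0)
    (hsub : ∀ a ≥ (0 : ℝ), ∀ b ≥ (0 : ℝ), ω (a + b) ≤ ω a + ω b) :
    ∀ (n : ℕ) (s : ℝ), 0 ≤ s → ω (n * s) ≤ n * ω s := by
  intro n
  induction n with
  | zero => intro s hs; simp [hzero]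
  | succ n ih =>
    intro s hs
    have h1 : ((n : ℝ) + 1) * s = n * s + s := by ring
    push_cast
    rw [h1]
    calc ω (n * s + s) ≤ ω (n * s) + ω s :=
          hsub _ (by positivity) _ hs
      _ ≤ n * ω s + ω s := by linarith [ih s hs]
      _ = ((n : ℝ) + 1) * ω s := by ring

private lemma omega_finset_sum {ω : ℝ → ℝ} (hmono : Monotone ω) (hzero : ω 0 = 0)
    (hsub : ∀ a ≥ (0 : ℝ), ∀ b ≥ (0 : ℝ), ω (a + b) ≤ ω a + ω b)
    (g : ℕ → ℝ) (hg : ∀ k, 0 ≤ g k) :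
    ∀ s : Finset ℕ, ω (∑ k ∈ s, g k) ≤ ∑ k ∈ s, ω (g k) := by
  classical
  intro s
  induction s using Finset.induction_on with
  | empty => simp [hzero]
  | @insert a s' hx ih =>
    rw [Finset.sum_insert hx, Finset.sum_insert hx]
    calc ω (g a + ∑ k ∈ s', g k) ≤ ω (g a) + ω (∑ k ∈ s', g k) :=
          hsub _ (hg a) _ (Finset.sum_nonneg fun k _ => hg k)
      _ ≤ ω (g a) + ∑ k ∈ s', ω (g k) := by linarith

/-- If ∑ₖ ∫ ω(|fₖ|) < ∞ then the partial sums of ∑ₖ fₖ are Cauchy in the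
Luxemburg quasi-norm. -/
theorem luxemburg_cauchy {X : Type*} [MeasurableSpace X] (μ : Measure X)
    (ω : ℝ → ℝ) (p : ℝ) (hp0 : 0 < p) (hp1 : p ≤ 1)
    (hcont : Continuous ω) (hmono : Monotone ω) (hzero : ω 0 = 0)
    (hsub : ∀ a ≥ (0 : ℝ), ∀ b ≥ (0 : ℝ), ω (a + b) ≤ ω a + ω b)
    (hlo : ∀ s > 0, ∀ t : ℝ, 0 < t → t < 1 → ω (s * t) ≤ t ^ p * ω s)
    (f : ℕ → X → ℝ) (hmeas : ∀ k, Measurable (f k))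
    (hsum : (∑' k : ℕ, ∫⁻ x, ENNReal.ofReal (ω |f k x|) ∂μ) ≠ ⊤)
    (lux : (X → ℝ) → ℝ≥0∞)
    (hlux : ∀ g : X → ℝ, lux g = sInf {l : ℝ≥0∞ | 0 < l ∧ l ≠ ⊤ ∧
        (∫⁻ x, ENNReal.ofReal (ω (|g x| / l.toReal)) ∂μ) ≤ 1}) :
    ∀ ε : ℝ, 0 < ε → ∃ N : ℕ, ∀ m n : ℕ, N ≤ m → m ≤ n →
      lux (fun x => ∑ k ∈ Finset.Icc m n, f k x) ≤ ENNReal.ofReal ε := by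
  classical
  intro ε hε
  set a : ℕ → ℝ≥0∞ := fun k => ∫⁻ x, ENNReal.ofReal (ω |f k x|) ∂μ with ha
  set t : ℝ := min ε 1 with ht
  have ht0 : 0 < t := lt_min hε one_pos
  have ht1 : t ≤ 1 := min_le_right _ _
  have htε : t ≤ ε := min_le_left _ _
  set c : ℕ := ⌈1 / t⌉₊ with hc
  have hc1 : 1 ≤ c := Nat.one_le_ceil_iff.mpr (by positivity)
  have hc0 : (c : ℝ≥0∞) ≠ 0 := by
    simp only [Ne, Nat.cast_eq_zero]; omega
  have hcinv_pos : (0 : ℝ≥0∞) < (c : ℝ≥0∞)⁻¹ := by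
    simp [ENNReal.inv_pos]
  -- choose N with tail sum small
  have htail := ENNReal.tendsto_sum_nat_add a hsum
  have hev : ∀ᶠ N in Filter.atTop, (∑' k, a (k + N)) < (c : ℝ≥0∞)⁻¹ :=
    htail.eventually (gt_mem_nhds hcinv_pos)
  obtain ⟨N, hN⟩ := hev.exists
  refine ⟨N, fun m n hNm hmn => ?_⟩
  set g : X → ℝ := fun x => ∑ k ∈ Finset.Icc m n, f k x with hg
  -- Finset sum bound via tail
  have hsum_le : (∑ k ∈ Finset.Icc m n, a k) ≤ (c : ℝ≥0∞)⁻¹ := by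
    have himg : ∑ k ∈ Finset.Icc m n, a k
        = ∑ j ∈ (Finset.Icc m n).image (· - N), a (j + N) := by
      rw [Finset.sum_image]
      · refine Finset.sum_congr rfl fun k hk => ?_
        have : N ≤ k := le_trans hNm (Finset.mem_Icc.mp hk).1
        rw [Nat.sub_add_cancel this]
      · intro x hx y hy hxy
        have hxN : N ≤ x := le_trans hNm (Finset.mem_Icc.mp hx).1
        have hyN : N ≤ y := le_trans hNm (Finset.mem_Icc.mp hy).1
        simp only at hxy
        omega
    rw [himg]
    exact le_trans (ENNReal.sum_le_tsum _) hN.le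
  -- pointwise bound
  have hωg_meas : Measurable fun x => ENNReal.ofReal (ω (|g x| / t)) := by
    apply ENNReal.measurable_ofReal.comp
    apply hcont.measurable.comp
    exact ((Finset.measurable_sum _ fun k _ => hmeas k).abs.div_const t)
  have hpt : ∀ x, ω (|g x| / t) ≤ (c : ℝ) * ∑ k ∈ Finset.Icc m n, ω |f k x| := by
    intro x
    have hgabs : 0 ≤ |g x| := abs_nonneg _
    have h1 : |g x| / t ≤ (c : ℝ) * |g x| := by
      rw [div_eq_mul_inv, mul_comm]
      apply mul_le_mul_of_nonneg_right _ hgabs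
      calc t⁻¹ = 1 / t := (one_div t).symm
        _ ≤ (c : ℝ) := Nat.le_ceil _
    have h2 : ω (|g x| / t) ≤ ω ((c : ℝ) * |g x|) := hmono h1
    have h3 : ω ((c : ℝ) * |g x|) ≤ (c : ℝ) * ω (|g x|) :=
      omega_nat_mul hmono hzero hsub c _ hgabs
    have h4 : ω (|g x|) ≤ ∑ k ∈ Finset.Icc m n, ω |f k x| := by
      calc ω (|g x|) ≤ ω (∑ k ∈ Finset.Icc m n, |f k x|) := by
            apply hmono
            exact Finset.abs_sum_le_sum_abs _ _
        _ ≤ ∑ k ∈ Finset.Icc m n, ω |f k x| :=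
            omega_finset_sum hmono hzero hsub _ (fun k => abs_nonneg _) _
    have hcnn : (0 : ℝ) ≤ (c : ℝ) := Nat.cast_nonneg c
    nlinarith [mul_le_mul_of_nonneg_left h4 hcnn]
  -- integral bound
  have hint : (∫⁻ x, ENNReal.ofReal (ω (|g x| / t)) ∂μ) ≤ 1 := by
    have step1 : (∫⁻ x, ENNReal.ofReal (ω (|g x| / t)) ∂μ)
        ≤ ∫⁻ x, (c : ℝ≥0∞) * ∑ k ∈ Finset.Icc m n, ENNReal.ofReal (ω |f k x|) ∂μ := by
      apply lintegral_mono
      intro x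
      calc ENNReal.ofReal (ω (|g x| / t))
          ≤ ENNReal.ofReal ((c : ℝ) * ∑ k ∈ Finset.Icc m n, ω |f k x|) :=
            ENNReal.ofReal_le_ofReal (hpt x)
        _ = ENNReal.ofReal (c : ℝ) * ENNReal.ofReal (∑ k ∈ Finset.Icc m n, ω |f k x|) :=
            ENNReal.ofReal_mul (Nat.cast_nonneg c)
        _ = (c : ℝ≥0∞) * ∑ k ∈ Finset.Icc m n, ENNReal.ofReal (ω |f k x|) := by
            rw [ENNReal.ofReal_natCast,
              ENNReal.ofReal_sum_of_nonneg fun k _ =>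
                omega_nonneg hmono hzero (abs_nonneg _)]
    have step2 : (∫⁻ x, (c : ℝ≥0∞) * ∑ k ∈ Finset.Icc m n, ENNReal.ofReal (ω |f k x|) ∂μ)
        = (c : ℝ≥0∞) * ∑ k ∈ Finset.Icc m n, a k := by
      rw [lintegral_const_mul]
      · congr 1
        rw [lintegral_finset_sum]
        intro k _
        exact ENNReal.measurable_ofReal.comp (hcont.measurable.comp (hmeas k).abs)
      · exact Finset.measurable_sum _ fun k _ =>
          ENNReal.measurable_ofReal.comp (hcont.measurable.comp (hmeas k).abs)
    calc (∫⁻ x, ENNReal.ofReal (ω (|g x| / t)) ∂μ)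
        ≤ (c : ℝ≥0∞) * ∑ k ∈ Finset.Icc m n, a k := by rw [← step2]; exact step1
      _ ≤ (c : ℝ≥0∞) * (c : ℝ≥0∞)⁻¹ := mul_le_mul_right hsum_le _
      _ = 1 := ENNReal.mul_inv_cancel hc0 (ENNReal.natCast_ne_top c)
  -- conclude
  rw [hlux]
  refine le_trans (sInf_le ?_) (ENNReal.ofReal_le_ofReal htε)
  refine ⟨ENNReal.ofReal_pos.mpr ht0, ENNReal.ofReal_ne_top, ?_⟩
  rwa [ENNReal.toReal_ofReal ht0.le]
end

section
/- Let ω be strictly increasing on [0,∞), ω(0)=0, of strictly lower type p_ω ∈ (0,1], concave; let q ∈ [p_ω, 1] and define v(t) := ω^{-1}(t) t^{1/q - 1/p_ω} for t > 0. Assume v is strictly increasing with inverse \widetilde{ω} := v^{-1}. Then \widetilde{ω} is of strictly lower type q: \widetilde{ω}(st) ≤ t^q \widetilde{ω}(s) for all s > 0 and t ∈ (0,1). -/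
/-- With v(t) = ω⁻¹(t) t^{1/q-1/p_ω} and ω̃ = v⁻¹, the function ω̃ is of strictly
lower type q. -/
theorem tilde_omega_lower_type_q (ω ωinv : ℝ → ℝ) (pω q : ℝ)
    (hp0 : 0 < pω) (hp1 : pω ≤ 1) (hq0 : pω ≤ q) (hq1 : q ≤ 1)
    (hmono : StrictMonoOn ω (Set.Ici 0)) (hzero : ω 0 = 0)
    (hconc : ConcaveOn ℝ (Set.Ici 0) ω)
    (hinv1 : ∀ t ≥ (0 : ℝ), ωinv (ω t) = t) (hinv2 : ∀ t ≥ (0 : ℝ), ω (ωinv t) = t)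
    (hinvpos : ∀ t > 0, 0 < ωinv t)
    (hlo : ∀ s > 0, ∀ t : ℝ, 0 < t → t < 1 → ω (s * t) ≤ t ^ pω * ω s)
    (v ωt : ℝ → ℝ)
    (hv : ∀ t > 0, v t = ωinv t * t ^ (1 / q - 1 / pω))
    (hvmono : StrictMonoOn v (Set.Ioi 0)) (hvpos : ∀ t > 0, 0 < v t)
    (ht1 : ∀ t > 0, ωt (v t) = t) (ht2 : ∀ t > 0, v (ωt t) = t)
    (htpos : ∀ t > 0, 0 < ωt t) :
    ∀ s > 0, ∀ t : ℝ, 0 < t → t < 1 → ωt (s * t) ≤ t ^ q * ωt s := by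
  intro s hs t ht0 ht1'
  have hq0' : 0 < q := lt_of_lt_of_le hp0 hq0
  -- ωinv is monotone on positives
  have hinvmono : ∀ a > 0, ∀ b > 0, a ≤ b → ωinv a ≤ ωinv b := by
    intro a ha b hb hab
    by_contra h
    push_neg at h
    have := hmono (le_of_lt (hinvpos b hb)) (le_of_lt (hinvpos a ha)) h
    rw [hinv2 a (le_of_lt ha), hinv2 b (le_of_lt hb)] at this
    linarith
  -- ωt is monotone on positives
  have htmono : ∀ a > 0, ∀ b > 0, a ≤ b → ωt a ≤ ωt b := by
    intro a ha b hb hab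
    by_contra h
    push_neg at h
    have := hvmono (Set.mem_Ioi.mpr (htpos b hb)) (Set.mem_Ioi.mpr (htpos a ha)) h
    rw [ht2 a ha, ht2 b hb] at this
    linarith
  set u := ωt s with hu
  have hupos : 0 < u := htpos s hs
  have hvu : v u = s := ht2 s hs
  -- key inequality: t^{q/pω} * ωinv u ≤ ωinv (t^q * u)
  have htq : (0:ℝ) < t ^ q := Real.rpow_pos_of_pos ht0 q
  have htqu : (0:ℝ) < t ^ q * u := mul_pos htq hupos
  have ht' : (0:ℝ) < t ^ (q / pω) := Real.rpow_pos_of_pos ht0 _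
  have ht'1 : t ^ (q / pω) < 1 :=
    Real.rpow_lt_one (le_of_lt ht0) ht1' (div_pos hq0' hp0)
  have hkey : t ^ (q / pω) * ωinv u ≤ ωinv (t ^ q * u) := by
    have h1 := hlo (ωinv u) (hinvpos u hupos) (t ^ (q / pω)) ht' ht'1
    rw [hinv2 u (le_of_lt hupos)] at h1
    have hexp : (t ^ (q / pω)) ^ pω = t ^ q := by
      rw [← Real.rpow_mul (le_of_lt ht0), div_mul_cancel₀ _ (ne_of_gt hp0)]
    rw [hexp] at h1
    have h2 := hinvmono (ω (ωinv u * t ^ (q / pω)))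
      (by rw [← hzero]; exact hmono (Set.mem_Ici.mpr (le_refl 0))
            (Set.mem_Ici.mpr (le_of_lt (mul_pos (hinvpos u hupos) ht'))) (mul_pos (hinvpos u hupos) ht'))
      (t ^ q * u) htqu h1
    rw [hinv1 _ (le_of_lt (mul_pos (hinvpos u hupos) ht'))] at h2
    linarith [h2]
  -- compute v (t^q * u) and show s * t ≤ v (t^q * u)
  have hvval : v (t ^ q * u) = ωinv (t ^ q * u) * (t ^ (1 - q / pω) * u ^ (1 / q - 1 / pω)) := by
    rw [hv _ htqu, Real.mul_rpow (le_of_lt htq) (le_of_lt hupos),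
      ← Real.rpow_mul (le_of_lt ht0)]
    rw [show q * (1 / q - 1 / pω) = 1 - q / pω by
      field_simp]
  have hstep : s * t ≤ v (t ^ q * u) := by
    rw [hvval]
    have hpos2 : (0:ℝ) < t ^ (1 - q / pω) * u ^ (1 / q - 1 / pω) :=
      mul_pos (Real.rpow_pos_of_pos ht0 _) (Real.rpow_pos_of_pos hupos _)
    have := mul_le_mul_of_nonneg_right hkey (le_of_lt hpos2)
    calc s * t = ωinv u * u ^ (1 / q - 1 / pω) * t := by
          rw [← hvu, hv u hupos]
      _ = (t ^ (q / pω) * ωinv u) * (t ^ (1 - q / pω) * u ^ (1 / q - 1 / pω)) := by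
          rw [show t ^ (q / pω) * ωinv u * (t ^ (1 - q / pω) * u ^ (1 / q - 1 / pω))
              = (t ^ (q / pω) * t ^ (1 - q / pω)) * (ωinv u * u ^ (1 / q - 1 / pω)) by ring,
            ← Real.rpow_add ht0, show q / pω + (1 - q / pω) = 1 by ring, Real.rpow_one]
          ring
      _ ≤ ωinv (t ^ q * u) * (t ^ (1 - q / pω) * u ^ (1 / q - 1 / pω)) := this
  -- conclude
  have hst : 0 < s * t := mul_pos hs ht0
  have := htmono (s * t) hst (v (t ^ q * u)) (lt_of_lt_of_le hst hstep) hstep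
  rw [ht1 _ htqu] at this
  exact this
end
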